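/- Let p ∈ (0,1), ε > 0, β > 0, α ≥ 0, r > 0 and u, g ∈ ℝ. Define p_ε(v) = (1/(2r))·(v − (u − r·g))² + (α/2)·v² + β·ψ_ε(v²) and p_c(v) = (1/(2r))·(v − (u − r·g))² + (α/2)·v² + β·(ψ_ε(u²) + ψ_ε'(u²)·(v² − u²)). If p₁ is any global minimizer of p_ε on ℝ and p₂ is the unique global minimizer of p_c on ℝ, then |p₂ − u| ≤ (4 + 2/p)·|p₁ − u|. -/
import Mathlib


/-- The smooth approximation `ψ_ε` of `t ↦ t^{p/2}`:
`ψ_ε(t) = (p/2)·t/ε^{2−p} + (1 − p/2)·ε^p` for `0 ≤ t < ε²` and `ψ_ε(t) = t^{p/2}` for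
`t ≥ ε²` (so `ψ_0(t) = t^{p/2}`). Exponents are real powers. -/
noncomputable def psi (p ε t : ℝ) : ℝ :=
  if t < ε ^ 2 then p / 2 * t / ε ^ (2 - p) + (1 - p / 2) * ε ^ p
  else t ^ (p / 2)

/-- The derivative `ψ_ε'(t) = (p/2)·min(ε^{p−2}, t^{(p−2)/2})` of `ψ_ε` (for `ε > 0`);
since `t^{(p−2)/2} ≥ ε^{p−2}` precisely for `0 ≤ t ≤ ε²`, the minimum is the first
entry on `[0, ε²)` and the second one on `[ε², ∞)`. -/
noncomputable def psiDeriv (p ε t : ℝ) : ℝ :=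
  if t < ε ^ 2 then p / 2 * ε ^ (p - 2) else p / 2 * t ^ ((p - 2) / 2)

private lemma bern {q A B : ℝ} (hq0 : 0 < q) (hq1 : q ≤ 1) (hA : 0 < A) (hB : 0 < B) :
    A ^ q ≤ B ^ q + q * B ^ (q - 1) * (A - B) := by
  have hB' : B ≠ 0 := hB.ne'
  have hAB : 0 < A / B := div_pos hA hB
  have hs : (-1 : ℝ) ≤ A / B - 1 := by linarith
  have h := rpow_one_add_le_one_add_mul_self hs hq0.le hq1
  have he : (1 : ℝ) + (A / B - 1) = A / B := by ring
  rw [he] at h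
  have hBq : 0 < B ^ q := Real.rpow_pos_of_pos hB q
  have h2 : (A / B) ^ q = A ^ q / B ^ q := Real.div_rpow hA.le hB.le q
  rw [h2] at h
  have h4 : A ^ q ≤ B ^ q * (1 + q * (A / B - 1)) := by
    have h5 := mul_le_mul_of_nonneg_left h hBq.le
    calc A ^ q = B ^ q * (A ^ q / B ^ q) := by field_simp
      _ ≤ B ^ q * (1 + q * (A / B - 1)) := h5
  have h3 : B ^ (q - 1) = B ^ q / B := by
    rw [Real.rpow_sub hB, Real.rpow_one]
  calc A ^ q ≤ B ^ q * (1 + q * (A / B - 1)) := h4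
    _ = B ^ q + q * B ^ (q - 1) * (A - B) := by rw [h3]; field_simp

private lemma psi_nonneg {p ε : ℝ} (hp0 : 0 < p) (hp1 : p < 1) (hε : 0 < ε)
    {t : ℝ} (ht : 0 ≤ t) : 0 ≤ psi p ε t := by
  unfold psi; split_ifs with h
  · have h1 : 0 ≤ p / 2 * t / ε ^ (2 - p) :=
      div_nonneg (mul_nonneg (by linarith) ht) (Real.rpow_pos_of_pos hε _).le
    have h2 : 0 < ε ^ p := Real.rpow_pos_of_pos hε _
    nlinarith
  · exact Real.rpow_nonneg ht _

private lemma psiDeriv_sq {p ε : ℝ} (hε : 0 < ε) (x : ℝ) :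
    psiDeriv p ε (x ^ 2) = p / 2 * (max ε |x|) ^ (p - 2) := by
  unfold psiDeriv; split_ifs with h
  · have hx : |x| < ε := by nlinarith [sq_abs x, abs_nonneg x]
    rw [max_eq_left hx.le]
  · push_neg at h
    have hx : ε ≤ |x| := by nlinarith [sq_abs x, abs_nonneg x]
    rw [max_eq_right hx]
    congr 1
    rw [← sq_abs x, ← Real.rpow_natCast |x| 2, ← Real.rpow_mul (abs_nonneg x)]
    congr 1; push_cast; ring

private lemma psi_tangent {p ε : ℝ} (hp0 : 0 < p) (hp1 : p < 1) (hε : 0 < ε)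
    {t c : ℝ} (ht : 0 ≤ t) (hc : 0 ≤ c) :
    psi p ε t ≤ psi p ε c + psiDeriv p ε c * (t - c) := by
  have hE : (0:ℝ) < ε ^ 2 := by positivity
  have hinv : (ε ^ (2 - p))⁻¹ = ε ^ (p - 2) := by
    rw [← Real.rpow_neg hε.le]
    congr 1; ring
  have hdiv : ∀ x : ℝ, p / 2 * x / ε ^ (2 - p) = p / 2 * x * ε ^ (p - 2) := by
    intro x; rw [div_eq_mul_inv, hinv]
  have hq0 : 0 < p / 2 := by linarith
  have hq1 : p / 2 ≤ 1 := by linarith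
  have e1 : ((ε:ℝ) ^ 2) ^ (p / 2) = ε ^ p := by
    rw [← Real.rpow_natCast ε 2, ← Real.rpow_mul hε.le]
    congr 1; push_cast; ring
  have e2 : ((ε:ℝ) ^ 2) ^ (p / 2 - 1) = ε ^ (p - 2) := by
    rw [← Real.rpow_natCast ε 2, ← Real.rpow_mul hε.le]
    congr 1; push_cast; ring
  have e4 : ε ^ (p - 2) * ε ^ 2 = ε ^ p := by
    rw [← Real.rpow_natCast ε 2, ← Real.rpow_add hε]
    congr 1; push_cast; ring
  have e4' : p / 2 * (ε ^ (p - 2) * ε ^ 2) = p / 2 * ε ^ p := by rw [e4]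
  have hexp : (p - 2) / 2 = p / 2 - 1 := by ring
  unfold psi psiDeriv
  by_cases hcE : c < ε ^ 2
  · simp only [if_pos hcE]
    by_cases htE : t < ε ^ 2
    · simp only [if_pos htE]
      rw [hdiv, hdiv]
      exact le_of_eq (by ring)
    · simp only [if_neg htE]
      push_neg at htE
      have htpos : 0 < t := lt_of_lt_of_le hE htE
      have hb := bern hq0 hq1 htpos hE
      rw [e1, e2] at hb
      rw [hdiv]
      linarith [hb, e4']
  · simp only [if_neg hcE, hexp]
    push_neg at hcE
    have hcpos : 0 < c := lt_of_lt_of_le hE hcE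
    by_cases htE : t < ε ^ 2
    · simp only [if_pos htE]
      rw [hdiv]
      have hb := bern hq0 hq1 hE hcpos
      rw [e1] at hb
      have hslope : c ^ (p / 2 - 1) ≤ (ε ^ 2 : ℝ) ^ (p / 2 - 1) :=
        Real.rpow_le_rpow_of_nonpos hE hcE (by linarith)
      rw [e2] at hslope
      have hH : 0 ≤ p / 2 * (ε ^ (p - 2) - c ^ (p / 2 - 1)) * (ε ^ 2 - t) :=
        mul_nonneg (mul_nonneg hq0.le (by linarith)) (by linarith)
      linarith [hb, hH, e4']
    · simp only [if_neg htE]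
      push_neg at htE
      have htpos : 0 < t := lt_of_lt_of_le hE htE
      have hb := bern hq0 hq1 htpos hcpos
      linarith [hb]

private lemma quad_vertex {a L x : ℝ} (ha : 0 < a)
    (h : ∀ v : ℝ, a * x ^ 2 - L * x ≤ a * v ^ 2 - L * v) : 2 * a * x = L := by
  have h2a : (2 * a) ≠ 0 := by positivity
  have h4a : (0:ℝ) < 4 * a := by linarith
  have h' := h (x - (2 * a * x - L) / (2 * a))
  have key : a * (x - (2 * a * x - L) / (2 * a)) ^ 2 - L * (x - (2 * a * x - L) / (2 * a))
      = a * x ^ 2 - L * x - (2 * a * x - L) ^ 2 / (4 * a) := by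
    field_simp
    ring
  rw [key] at h'
  have h2 : (2 * a * x - L) ^ 2 / (4 * a) ≤ 0 := by linarith
  have h3 : 0 ≤ (2 * a * x - L) ^ 2 / (4 * a) := by positivity
  have h4 : (2 * a * x - L) ^ 2 / (4 * a) = 0 := le_antisymm h2 h3
  have h5 : (2 * a * x - L) ^ 2 = 0 := by
    rcases div_eq_zero_iff.mp h4 with h | h
    · exact h
    · exact absurd h h4a.ne'
  have h6 : 2 * a * x - L = 0 := by
    exact pow_eq_zero_iff (by norm_num) |>.mp h5
  linarith

private lemma abs_le_mul_abs {x y C : ℝ} (hC : 0 ≤ C) (h : x ^ 2 ≤ C ^ 2 * y ^ 2) :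
    |x| ≤ C * |y| := by
  have h1 : |x| ^ 2 ≤ (C * |y|) ^ 2 := by rw [mul_pow, sq_abs, sq_abs]; exact h
  have h2 : 0 ≤ C * |y| := mul_nonneg hC (abs_nonneg y)
  nlinarith [abs_nonneg x, h1, h2]

set_option maxHeartbeats 2000000 in
/-- comparison of scalar proximal points of the smoothed `L^p`-term and of
its convexification: if `p₁` globally minimizes
`p_ε(v) = (1/(2r))(v − (u − r g))² + (α/2)v² + β ψ_ε(v²)` and `p₂` globally minimizes
`p_c(v) = (1/(2r))(v − (u − r g))² + (α/2)v² + β(ψ_ε(u²) + ψ_ε'(u²)(v² − u²))`, then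
`|p₂ − u| ≤ (4 + 2/p)|p₁ − u|`. -/
theorem scalar_prox_comparison (p ε β α r u g : ℝ)
    (hp0 : 0 < p) (hp1 : p < 1) (hε : 0 < ε) (hβ : 0 < β) (hα : 0 ≤ α) (hr : 0 < r)
    (p₁ p₂ : ℝ)
    (hp₁ : ∀ v : ℝ,
      1 / (2 * r) * (p₁ - (u - r * g)) ^ 2 + α / 2 * p₁ ^ 2 + β * psi p ε (p₁ ^ 2) ≤
      1 / (2 * r) * (v - (u - r * g)) ^ 2 + α / 2 * v ^ 2 + β * psi p ε (v ^ 2))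
    (hp₂ : ∀ v : ℝ,
      1 / (2 * r) * (p₂ - (u - r * g)) ^ 2 + α / 2 * p₂ ^ 2 +
          β * (psi p ε (u ^ 2) + psiDeriv p ε (u ^ 2) * (p₂ ^ 2 - u ^ 2)) ≤
      1 / (2 * r) * (v - (u - r * g)) ^ 2 + α / 2 * v ^ 2 +
          β * (psi p ε (u ^ 2) + psiDeriv p ε (u ^ 2) * (v ^ 2 - u ^ 2))) :
    |p₂ - u| ≤ (4 + 2 / p) * |p₁ - u| := by
  have hC2 : (2:ℝ) < 2 / p := by
    rw [lt_div_iff₀ hp0]; linarith only [hp0, hp1]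
  have hC0 : (0:ℝ) < 4 + 2 / p := by linarith
  have hC1 : (1:ℝ) ≤ 4 + 2 / p := by linarith
  obtain ⟨w, hw⟩ : ∃ w : ℝ, w = u - r * g := ⟨_, rfl⟩
  obtain ⟨A, hA⟩ : ∃ A : ℝ, A = 1 / (2 * r) := ⟨_, rfl⟩
  obtain ⟨Pu, hPu⟩ : ∃ x : ℝ, x = psi p ε (u ^ 2) := ⟨_, rfl⟩
  obtain ⟨P1, hP1⟩ : ∃ x : ℝ, x = psi p ε (p₁ ^ 2) := ⟨_, rfl⟩
  obtain ⟨k, hk⟩ : ∃ x : ℝ, x = psiDeriv p ε (u ^ 2) := ⟨_, rfl⟩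
  obtain ⟨K, hK⟩ : ∃ x : ℝ, x = psiDeriv p ε (p₁ ^ 2) := ⟨_, rfl⟩
  rw [← hw, ← hA, ← hP1] at hp₁
  rw [← hw, ← hA, ← hPu, ← hk] at hp₂
  have hA0 : 0 < A := by rw [hA]; positivity
  have hMu0 : 0 < max ε |u| := lt_of_lt_of_le hε (le_max_left _ _)
  have hM10 : 0 < max ε |p₁| := lt_of_lt_of_le hε (le_max_left _ _)
  have hkf : k = p / 2 * (max ε |u|) ^ (p - 2) := by rw [hk]; exact psiDeriv_sq hε u
  have hKf : K = p / 2 * (max ε |p₁|) ^ (p - 2) := by rw [hK]; exact psiDeriv_sq hε p₁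
  have hk0 : 0 < k := by
    rw [hkf]; exact mul_pos (by linarith) (Real.rpow_pos_of_pos hMu0 _)
  have hK0 : 0 < K := by
    rw [hKf]; exact mul_pos (by linarith) (Real.rpow_pos_of_pos hM10 _)
  have ha0 : 0 < A + α / 2 + β * k := by linarith only [mul_pos hβ hk0, hA0, hα]
  have ha10 : 0 < A + α / 2 + β * K := by linarith only [mul_pos hβ hK0, hA0, hα]
  -- p₂ is the vertex of the convexified quadratic
  have hv2' : ∀ v : ℝ, (A + α / 2 + β * k) * p₂ ^ 2 - 2 * A * w * p₂ ≤
      (A + α / 2 + β * k) * v ^ 2 - 2 * A * w * v := by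
    intro v
    have h := hp₂ v
    linarith only [h]
  have hv2 : 2 * (A + α / 2 + β * k) * p₂ = 2 * A * w := quad_vertex ha0 hv2'
  -- p₁ is the vertex of the quadratic majorant tangent at p₁
  have hv1' : ∀ v : ℝ, (A + α / 2 + β * K) * p₁ ^ 2 - 2 * A * w * p₁ ≤
      (A + α / 2 + β * K) * v ^ 2 - 2 * A * w * v := by
    intro v
    have h1 := hp₁ v
    have h2 := psi_tangent hp0 hp1 hε (sq_nonneg v) (sq_nonneg p₁)
    rw [← hK, ← hP1] at h2
    have h3 := mul_le_mul_of_nonneg_left h2 hβ.le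
    linarith only [h1, h3]
  have hv1 : 2 * (A + α / 2 + β * K) * p₁ = 2 * A * w := quad_vertex ha10 hv1'
  -- energy inequality
  have t1 := psi_tangent hp0 hp1 hε (sq_nonneg p₂) (sq_nonneg u)
  rw [← hk, ← hPu] at t1
  have t2 := psi_tangent hp0 hp1 hε (sq_nonneg u) (sq_nonneg p₁)
  rw [← hK, ← hP1, ← hPu] at t2
  have t1b := mul_le_mul_of_nonneg_left t1 hβ.le
  have t2b := mul_le_mul_of_nonneg_left t2 hβ.le
  have idQ : (A * (u - w) ^ 2 + α / 2 * u ^ 2 + β * (Pu + k * (u ^ 2 - u ^ 2)))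
      - (A * (p₂ - w) ^ 2 + α / 2 * p₂ ^ 2 + β * (Pu + k * (p₂ ^ 2 - u ^ 2)))
      = (A + α / 2 + β * k) * (p₂ - u) ^ 2 := by linear_combination (u - p₂) * hv2
  have idQ1 : (A * (u - w) ^ 2 + α / 2 * u ^ 2 + β * (P1 + K * (u ^ 2 - p₁ ^ 2)))
      - (A * (p₁ - w) ^ 2 + α / 2 * p₁ ^ 2 + β * (P1 + K * (p₁ ^ 2 - p₁ ^ 2)))
      = (A + α / 2 + β * K) * (p₁ - u) ^ 2 := by linear_combination (u - p₁) * hv1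
  have hE : (A + α / 2 + β * k) * (p₂ - u) ^ 2 ≤ (A + α / 2 + β * K) * (p₁ - u) ^ 2 := by
    have h12 := hp₁ p₂
    linarith only [idQ, idQ1, t1b, t2b, h12]
  by_cases hcase : max ε |u| ≤ (4 + 2 / p) * max ε |p₁|
  · -- comparable case: K ≤ C² k
    have hstep : (max ε |u|) / (4 + 2 / p) ≤ max ε |p₁| := by
      rw [div_le_iff₀ hC0]; linarith only [hcase]
    have hdivpos : 0 < (max ε |u|) / (4 + 2 / p) := div_pos hMu0 hC0
    have h1 : (max ε |p₁|) ^ (p - 2) ≤ ((max ε |u|) / (4 + 2 / p)) ^ (p - 2) :=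
      Real.rpow_le_rpow_of_nonpos hdivpos hstep (by linarith)
    have h2 : ((max ε |u|) / (4 + 2 / p)) ^ (p - 2)
        = (max ε |u|) ^ (p - 2) / (4 + 2 / p) ^ (p - 2) :=
      Real.div_rpow hMu0.le hC0.le _
    have h3 : ((4 + 2 / p) ^ (p - 2) : ℝ)⁻¹ = (4 + 2 / p) ^ (2 - p) := by
      rw [← Real.rpow_neg hC0.le]
      congr 1; ring
    have h5 : ((4 + 2 / p) : ℝ) ^ ((2:ℕ):ℝ) = (4 + 2 / p) ^ (2:ℕ) :=
      Real.rpow_natCast _ 2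
    have h4 : ((4 + 2 / p) : ℝ) ^ (2 - p) ≤ (4 + 2 / p) ^ (2:ℕ) := by
      rw [← h5]
      exact Real.rpow_le_rpow_of_exponent_le hC1 (by push_cast; linarith)
    have hMp : 0 < (max ε |u|) ^ (p - 2) := Real.rpow_pos_of_pos hMu0 _
    have hKC : K ≤ (4 + 2 / p) ^ 2 * k := by
      rw [hkf, hKf]
      have c1 : (max ε |p₁|) ^ (p - 2) ≤ (max ε |u|) ^ (p - 2) * (4 + 2 / p) ^ 2 := by
        calc (max ε |p₁|) ^ (p - 2) ≤ ((max ε |u|) / (4 + 2 / p)) ^ (p - 2) := h1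
          _ = (max ε |u|) ^ (p - 2) * (4 + 2 / p) ^ (2 - p) := by
              rw [h2, div_eq_mul_inv, h3]
          _ ≤ (max ε |u|) ^ (p - 2) * (4 + 2 / p) ^ 2 :=
              mul_le_mul_of_nonneg_left h4 hMp.le
      have c2 := mul_le_mul_of_nonneg_left c1 (show (0:ℝ) ≤ p / 2 by linarith)
      linarith only [c2]
    have hC2' : (1:ℝ) ≤ (4 + 2 / p) ^ 2 := by
      have hh := mul_le_mul hC1 hC1 zero_le_one (by linarith only [hC1] : (0:ℝ) ≤ 4 + 2 / p)
      linarith only [hh]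
    have haa : (A + α / 2 + β * K) ≤ (4 + 2 / p) ^ 2 * (A + α / 2 + β * k) := by
      have hb1 : β * K ≤ (4 + 2 / p) ^ 2 * (β * k) := by
        linarith only [mul_le_mul_of_nonneg_left hKC hβ.le]
      have e1 : 0 ≤ ((4 + 2 / p) ^ 2 - 1) * A := mul_nonneg (by linarith) hA0.le
      have e2 : 0 ≤ ((4 + 2 / p) ^ 2 - 1) * (α / 2) := mul_nonneg (by linarith) (by linarith)
      linarith only [hb1, e1, e2]
    have hsq : (p₂ - u) ^ 2 ≤ (4 + 2 / p) ^ 2 * (p₁ - u) ^ 2 := by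
      have h6 : (A + α / 2 + β * K) * (p₁ - u) ^ 2
          ≤ ((4 + 2 / p) ^ 2 * (A + α / 2 + β * k)) * (p₁ - u) ^ 2 :=
        mul_le_mul_of_nonneg_right haa (sq_nonneg _)
      have h7 : (A + α / 2 + β * k) * (p₂ - u) ^ 2
          ≤ (A + α / 2 + β * k) * ((4 + 2 / p) ^ 2 * (p₁ - u) ^ 2) := by
        linarith only [hE, h6]
      exact le_of_mul_le_mul_left h7 ha0
    exact abs_le_mul_abs hC0.le hsq
  · -- p₁ much smaller than u
    push_neg at hcase
    have hεu : ε ≤ |u| := by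
      by_contra hcon
      push_neg at hcon
      have h1 : max ε |u| = ε := max_eq_left hcon.le
      have h2 : ε ≤ max ε |p₁| := le_max_left _ _
      linarith only [hcase, h2, mul_nonneg (show (0:ℝ) ≤ 4 + 2 / p - 1 by linarith only [hC1]) hM10.le, h1]
    have hMuu : max ε |u| = |u| := max_eq_right hεu
    have hU0 : 0 < |u| := lt_of_lt_of_le hε hεu
    have hp1U : (4 + 2 / p) * |p₁| < |u| := by
      have h9 := mul_le_mul_of_nonneg_left (le_max_right ε |p₁|) hC0.le
      rw [hMuu] at hcase
      linarith only [hcase, h9]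
    have hu2E : ¬ (u ^ 2 < ε ^ 2) := by
      push_neg
      nlinarith only [hεu, sq_abs u, hε, abs_nonneg u]
    have hkexp : k = p / 2 * (u ^ 2) ^ ((p - 2) / 2) := by
      rw [hk]; unfold psiDeriv; rw [if_neg hu2E]
    have hPuexp : Pu = (u ^ 2) ^ ((p:ℝ) / 2) := by
      rw [hPu]; unfold psi; rw [if_neg hu2E]
    have hu2pos : (0:ℝ) < u ^ 2 := by
      have : u ≠ 0 := by intro h0; rw [h0] at hU0; simp at hU0
      positivity
    have hid : ((u:ℝ) ^ 2) ^ ((p - 2) / 2) * u ^ 2 = (u ^ 2) ^ ((p:ℝ) / 2) := by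
      calc ((u:ℝ) ^ 2) ^ ((p - 2) / 2) * u ^ 2
          = ((u:ℝ) ^ 2) ^ ((p - 2) / 2) * (u ^ 2) ^ (1:ℝ) := by rw [Real.rpow_one]
        _ = ((u:ℝ) ^ 2) ^ ((p - 2) / 2 + 1) := (Real.rpow_add hu2pos _ _).symm
        _ = (u ^ 2) ^ ((p:ℝ) / 2) := by congr 1; ring
    obtain ⟨v₀, hv0sq, hwv0⟩ : ∃ v₀ : ℝ, v₀ ^ 2 = u ^ 2 ∧ w * v₀ = |w * u| := by
      by_cases hcs : 0 ≤ w * u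
      · exact ⟨u, rfl, (abs_of_nonneg hcs).symm⟩
      · push_neg at hcs
        exact ⟨-u, by ring, by rw [abs_of_neg hcs]; ring⟩
    have h := hp₁ v₀
    rw [hv0sq, ← hPu] at h
    have idv : A * (v₀ - w) ^ 2 = A * u ^ 2 - 2 * A * |w * u| + A * w ^ 2 := by
      linear_combination A * hv0sq - 2 * A * hwv0
    have hP1n : 0 ≤ P1 := by rw [hP1]; exact psi_nonneg hp0 hp1 hε (sq_nonneg p₁)
    have hPub : β * Pu = β * ((u ^ 2) ^ ((p:ℝ) / 2)) := by rw [hPuexp]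
    have habs : 2 * A * (w * p₁) ≤ A * |w * u| := by
      have h2p1 : 2 * |p₁| ≤ |u| := by
        linarith only [hp1U, mul_nonneg (show (0:ℝ) ≤ 2 + 2 / p by linarith only [hC2]) (abs_nonneg p₁)]
      have e1 : |2 * A * (w * p₁)| = 2 * A * (|w| * |p₁|) := by
        rw [abs_mul (2 * A) (w * p₁), abs_mul w p₁,
          abs_of_pos (show (0:ℝ) < 2 * A by linarith)]
      have e2 : 2 * A * (|w| * |p₁|) ≤ A * (|w| * |u|) := by
        linarith only [mul_le_mul_of_nonneg_left h2p1 (mul_nonneg hA0.le (abs_nonneg w))]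
      calc 2 * A * (w * p₁) ≤ |2 * A * (w * p₁)| := le_abs_self _
        _ = 2 * A * (|w| * |p₁|) := e1
        _ ≤ A * (|w| * |u|) := e2
        _ = A * |w * u| := by rw [abs_mul]
    have hApsq : 0 ≤ A * p₁ ^ 2 := mul_nonneg hA0.le (sq_nonneg _)
    have hαsq : 0 ≤ α / 2 * p₁ ^ 2 := mul_nonneg (by linarith) (sq_nonneg _)
    have hβP1 : 0 ≤ β * P1 := mul_nonneg hβ.le hP1n
    have hw_b : A * |w * u| ≤ (A + α / 2) * u ^ 2 + β * ((u ^ 2) ^ ((p:ℝ) / 2)) := by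
      linarith only [h, idv, habs, hApsq, hαsq, hβP1, hPub]
    have haP : (A + α / 2 + β * k) * p₂ = A * w := by linarith only [hv2]
    have habs2 : (A + α / 2 + β * k) * |p₂| = A * |w| := by
      have h8 := congrArg abs haP
      rwa [abs_mul, abs_mul, abs_of_pos ha0, abs_of_pos hA0] at h8
    have hpp : 2 / p * (p / 2) = 1 := by field_simp
    have hqk : 2 / p * (β * k) * u ^ 2 = β * ((u ^ 2) ^ ((p:ℝ) / 2)) := by
      rw [hkexp]
      calc 2 / p * (β * (p / 2 * (u ^ 2) ^ ((p - 2) / 2))) * u ^ 2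
          = (2 / p * (p / 2)) * (β * ((u ^ 2) ^ ((p - 2) / 2) * u ^ 2)) := by ring
        _ = β * ((u ^ 2) ^ ((p:ℝ) / 2)) := by rw [hpp, hid, one_mul]
    have hwuA : A * |w * u| = A * (|w| * |u|) := by rw [abs_mul]
    have e5 : 0 ≤ (2 / p - 1) * ((A + α / 2) * u ^ 2) :=
      mul_nonneg (by linarith) (mul_nonneg (by linarith) (sq_nonneg u))
    have hstep2 : A * |w| * |u| ≤ 2 / p * (A + α / 2 + β * k) * u ^ 2 := by
      linarith only [hw_b, hqk, e5, hwuA]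
    have hp2b : ((A + α / 2 + β * k) * |p₂|) * |u|
        ≤ ((A + α / 2 + β * k) * (2 / p * |u|)) * |u| := by
      calc ((A + α / 2 + β * k) * |p₂|) * |u| = A * |w| * |u| := by rw [habs2]
        _ ≤ 2 / p * (A + α / 2 + β * k) * u ^ 2 := hstep2
        _ = ((A + α / 2 + β * k) * (2 / p * |u|)) * |u| := by rw [← sq_abs u]; ring
    have hp2c : (A + α / 2 + β * k) * |p₂| ≤ (A + α / 2 + β * k) * (2 / p * |u|) :=
      le_of_mul_le_mul_right hp2b hU0
    have hp2d : |p₂| ≤ 2 / p * |u| := le_of_mul_le_mul_left hp2c ha0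
    have htri : |p₂ - u| ≤ |p₂| + |u| := by
      calc |p₂ - u| = |p₂ + -u| := by rw [sub_eq_add_neg]
        _ ≤ |p₂| + |-u| := abs_add_le _ _
        _ = |p₂| + |u| := by rw [abs_neg]
    have habs1 : |u| - |p₁| ≤ |p₁ - u| := by
      calc |u| - |p₁| ≤ |u - p₁| := abs_sub_abs_le_abs_sub u p₁
        _ = |p₁ - u| := abs_sub_comm u p₁
    have hmul := mul_le_mul_of_nonneg_left habs1 hC0.le
    linarith only [htri, hp2d, hmul, hp1U, hU0.le, abs_nonneg p₁]
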